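/- arXiv:1004.3799 — 13 statements merged into one kernel-verified Lean document; each statement's English description precedes it below -/
import Mathlib

section
/- Let p and q be integers and let α, β ∈ ℂ satisfy α + β = p and αβ = −q. Then for every n ≥ 1, αⁿ + βⁿ = Σ_{k=0}^{⌊n/2⌋} (n/(n−k)) · C(n−k, k) · p^{n−2k} · q^k, where the coefficients n/(n−k)·C(n−k,k) are rational numbers (in fact integers) and C denotes the binomial coefficient. -/
def lucasCoeff : ℕ → ℕ → ℕ
  | _, 0 => 1
  | n, (k+1) => (n - (k+1)).choose (k+1) + (n - k - 2).choose k

lemma lc_zero (n : ℕ) : lucasCoeff n 0 = 1 := rfl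
lemma lc_succ (n k : ℕ) : lucasCoeff n (k+1) = (n - (k+1)).choose (k+1) + (n - k - 2).choose k := rfl

lemma lc_rec (n k : ℕ) (h : 2*k ≤ n) :
    lucasCoeff (n+2) (k+1) = lucasCoeff (n+1) (k+1) + lucasCoeff n k := by
  match k with
  | 0 => simp [lc_succ, lc_zero, Nat.choose_one_right]
  | (j+1) =>
    obtain ⟨a, rfl⟩ : ∃ a, n = 2*j + 2 + a := ⟨n - (2*j+2), by omega⟩
    simp only [lc_succ]
    rw [show 2*j+2+a+2 - (j+1+1) = j+a+2 by omega,
        show 2*j+2+a+2 - (j+1) - 2 = j+a+1 by omega,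
        show 2*j+2+a+1 - (j+1+1) = j+a+1 by omega,
        show 2*j+2+a+1 - (j+1) - 2 = j+a by omega,
        show 2*j+2+a - (j+1) = j+a+1 by omega,
        show 2*j+2+a - j - 2 = j+a by omega]
    have p1 : (j+a+2).choose (j+1+1) = (j+a+1).choose (j+1) + (j+a+1).choose (j+1+1) :=
      Nat.choose_succ_succ (j+a+1) (j+1)
    have p2 : (j+a+1).choose (j+1) = (j+a).choose j + (j+a).choose (j+1) :=
      Nat.choose_succ_succ (j+a) j
    omega

lemma lc_top (m : ℕ) (hm : 1 ≤ m) : lucasCoeff (2*m+1) (m+1) = 0 := by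
  rw [lc_succ, show 2*m+1-(m+1) = m by omega, show 2*m+1-m-2 = m-1 by omega,
      Nat.choose_eq_zero_of_lt (by omega), Nat.choose_eq_zero_of_lt (by omega)]

lemma coeff_eq (n k : ℕ) (hn : 1 ≤ n) (hk : k ≤ n/2) :
    ((n:ℂ)/((n:ℂ)-(k:ℂ))) * ((n-k).choose k : ℂ) = (lucasCoeff n k : ℂ) := by
  match k with
  | 0 =>
    have : (n:ℂ) ≠ 0 := Nat.cast_ne_zero.2 (by omega)
    simp [lc_zero, this]
  | (j+1) =>
    have h2 : 2*(j+1) ≤ n := by omega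
    obtain ⟨m', rfl⟩ : ∃ m', n = (j+1) + (m'+1) := ⟨n - (j+2), by omega⟩
    rw [lc_succ, show j+1+(m'+1) - (j+1) = m'+1 by omega,
        show j+1+(m'+1) - j - 2 = m' by omega]
    have key : (m'+1) * m'.choose j = (m'+1).choose (j+1) * (j+1) :=
      Nat.add_one_mul_choose_eq m' j
    have hden : ((j:ℂ)+1+(m'+1)) - ((j:ℂ)+1) = (m'+1 : ℂ) := by ring
    have hm1 : ((m' : ℂ)+1) ≠ 0 := Nat.cast_add_one_ne_zero m'
    push_cast
    rw [hden]
    field_simp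
    have keyC : ((m':ℂ)+1) * (m'.choose j : ℂ) = ((m'+1).choose (j+1) : ℂ) * ((j:ℂ)+1) := by
      exact_mod_cast congrArg (Nat.cast : ℕ → ℂ) key
    linear_combination (-1:ℂ)*keyC

noncomputable def Sc (p q : ℤ) (n : ℕ) : ℂ :=
  ∑ k ∈ Finset.range (n/2+1), (lucasCoeff n k : ℂ) * (p:ℂ)^(n-2*k) * (q:ℂ)^k

lemma S_rec (p q : ℤ) (n : ℕ) (hn : 1 ≤ n) :
    Sc p q (n+2) = p * Sc p q (n+1) + q * Sc p q n := by
  have e1 : (n+2)/2 + 1 = (n/2+1) + 1 := by omega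
  -- rewrite p * Sc p q (n+1)
  have hp : (p:ℂ) * Sc p q (n+1)
      = ∑ k ∈ Finset.range ((n+1)/2+1), (lucasCoeff (n+1) k : ℂ) * (p:ℂ)^(n+2-2*k) * (q:ℂ)^k := by
    rw [Sc, Finset.mul_sum]
    refine Finset.sum_congr rfl fun k hk => ?_
    have hk' : 2*k ≤ n+1 := by
      have := Finset.mem_range.1 hk; omega
    rw [show n+2-2*k = (n+1-2*k)+1 by omega, pow_succ]
    ring
  have hp2 : (p:ℂ) * Sc p q (n+1)
      = ∑ k ∈ Finset.range ((n/2+1)+1), (lucasCoeff (n+1) k : ℂ) * (p:ℂ)^(n+2-2*k) * (q:ℂ)^k := by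
    rw [hp]
    refine Finset.sum_subset (Finset.range_subset_range.2 (by omega)) fun k hk hk' => ?_
    have h1 := Finset.mem_range.1 hk
    have h2 : (n+1)/2 + 1 ≤ k := by
      by_contra hc
      exact hk' (Finset.mem_range.2 (by omega))
    obtain ⟨m, rfl⟩ : ∃ m, n = 2*m := ⟨n/2, by omega⟩
    have hk0 : k = m+1 := by omega
    subst hk0
    rw [lc_top m (by omega)]
    simp
  have hq : (q:ℂ) * Sc p q n
      = ∑ k ∈ Finset.range (n/2+1), (lucasCoeff n k : ℂ) * (p:ℂ)^(n-2*k) * (q:ℂ)^(k+1) := by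
    rw [Sc, Finset.mul_sum]
    refine Finset.sum_congr rfl fun k _ => ?_
    rw [pow_succ]; ring
  have hp3 : (p:ℂ) * Sc p q (n+1)
      = (∑ k ∈ Finset.range (n/2+1),
          (lucasCoeff (n+1) (k+1) : ℂ) * (p:ℂ)^(n+2-2*(k+1)) * (q:ℂ)^(k+1))
        + (lucasCoeff (n+1) 0 : ℂ) * (p:ℂ)^(n+2-2*0) * (q:ℂ)^0 := by
    rw [hp2, Finset.sum_range_succ']
  rw [Sc, e1, Finset.sum_range_succ', hp3, hq]
  have hterm : ∀ k ∈ Finset.range (n/2+1),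
      (lucasCoeff (n+2) (k+1) : ℂ) * (p:ℂ)^(n+2-2*(k+1)) * (q:ℂ)^(k+1)
      = (lucasCoeff (n+1) (k+1) : ℂ) * (p:ℂ)^(n+2-2*(k+1)) * (q:ℂ)^(k+1)
        + (lucasCoeff n k : ℂ) * (p:ℂ)^(n-2*k) * (q:ℂ)^(k+1) := by
    intro k hk
    have hk' : 2*k ≤ n := by
      have := Finset.mem_range.1 hk; omega
    rw [lc_rec n k hk', show n+2-2*(k+1) = n-2*k by omega]
    push_cast
    ring
  rw [Finset.sum_congr rfl hterm, Finset.sum_add_distrib]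
  simp [lc_zero]
  ring

lemma pow_eq_Sc (p q : ℤ) (α β : ℂ) (hsum : α + β = p) (hprod : α * β = -q) :
    ∀ n : ℕ, α ^ (n+1) + β ^ (n+1) = Sc p q (n+1) := by
  intro n
  induction n using Nat.strong_induction_on with
  | _ n ih =>
    match n with
    | 0 =>
      simp [Sc, Finset.sum_range_one, lc_zero]
      simpa using hsum
    | 1 =>
      rw [Sc]
      rw [show (2:ℕ)/2+1 = 2 from rfl, Finset.sum_range_succ, Finset.sum_range_one]
      norm_num [lc_zero, lc_succ]
      linear_combination (α+β+(p:ℂ))*hsum - 2*hprod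
    | (m+2) =>
      have h1 := ih (m+1) (by omega)
      have h2 := ih m (by omega)
      rw [show m+2+1 = (m+1)+2 from rfl, S_rec p q (m+1) (by omega), ← h1, ← h2]
      linear_combination (α^(m+1+1)+β^(m+1+1))*hsum - (α^(m+1)+β^(m+1))*hprod

theorem stmt_1 (p q : ℤ) (α β : ℂ) (hsum : α + β = p) (hprod : α * β = -q) :
    ∀ n : ℕ, 1 ≤ n →
      α ^ n + β ^ n =
        ∑ k ∈ Finset.range (n / 2 + 1),
          ((n : ℂ) / ((n : ℂ) - (k : ℂ))) * (Nat.choose (n - k) k : ℂ) *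
            (p : ℂ) ^ (n - 2 * k) * (q : ℂ) ^ k := by
  intro n hn
  obtain ⟨m, rfl⟩ : ∃ m, n = m + 1 := ⟨n - 1, by omega⟩
  rw [pow_eq_Sc p q α β hsum hprod m, Sc]
  refine Finset.sum_congr rfl fun k hk => ?_
  have hk' : k ≤ (m+1)/2 := by have := Finset.mem_range.1 hk; omega
  rw [← coeff_eq (m+1) k (by omega) hk']
end

section
/- For all natural numbers n ≥ 1 and all k with 0 ≤ k ≤ ⌊n/2⌋, the identity (n − k) · 2^{2k+1} · Σ_{i=k}^{⌊n/2⌋} C(n, 2i) · C(i, k) = n · 2ⁿ · C(n−k, k) holds; equivalently, Σ_{i=k}^{⌊n/2⌋} C(n, 2i)·C(i, k) = 2^{n−2k−1} · (n/(n−k)) · C(n−k, k). -/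
private def Ef (n k : ℕ) : ℕ :=
  ∑ i ∈ Finset.range (n+1), Nat.choose n (2*i) * Nat.choose i k

private def Of (n k : ℕ) : ℕ :=
  ∑ i ∈ Finset.range (n+1), Nat.choose n (2*i+1) * Nat.choose (i+1) k

private lemma Ef_top (n k : ℕ) :
    Ef n k = (∑ i ∈ Finset.range n, Nat.choose n (2*(i+1)) * Nat.choose (i+1) k)
      + Nat.choose 0 k := by
  unfold Ef
  rw [Finset.sum_range_succ']
  norm_num

private lemma Ef_succ (n k : ℕ) : Ef (n+1) k = Ef n k + Of n k := by
  have hterm : ∀ i, i ∈ Finset.range (n+1) → Nat.choose (n+1) (2*(i+1)) * Nat.choose (i+1) k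
      = Nat.choose n (2*i+1) * Nat.choose (i+1) k
        + Nat.choose n (2*(i+1)) * Nat.choose (i+1) k := by
    intro i _
    rw [show 2*(i+1) = (2*i+1)+1 by ring, Nat.choose_succ_succ, add_mul]
  unfold Ef
  rw [Finset.sum_range_succ']
  rw [Finset.sum_congr rfl hterm, Finset.sum_add_distrib]
  have h2 : (∑ i ∈ Finset.range (n+1), Nat.choose n (2*(i+1)) * Nat.choose (i+1) k)
      = ∑ i ∈ Finset.range n, Nat.choose n (2*(i+1)) * Nat.choose (i+1) k := by
    rw [Finset.sum_range_succ]
    have : Nat.choose n (2*(n+1)) = 0 := Nat.choose_eq_zero_of_lt (by omega)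
    simp [this]
  have h3 : (∑ i ∈ Finset.range (n+1), Nat.choose n (2*i+1) * Nat.choose (i+1) k) = Of n k := rfl
  have h4 : (∑ i ∈ Finset.range (n+1), Nat.choose n (2*i) * Nat.choose i k)
      = (∑ i ∈ Finset.range n, Nat.choose n (2*(i+1)) * Nat.choose (i+1) k)
        + Nat.choose 0 k := by
    rw [Finset.sum_range_succ']
    norm_num
  rw [h2, h3, h4]
  norm_num
  ring

private lemma Of_succ (n k : ℕ) :
    Of (n+1) (k+1) = Of n (k+1) + Ef n (k+1) + Ef n k := by
  have hterm : ∀ i, i ∈ Finset.range (n+2) →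
      Nat.choose (n+1) (2*i+1) * Nat.choose (i+1) (k+1)
      = Nat.choose n (2*i+1) * Nat.choose (i+1) (k+1)
        + (Nat.choose n (2*i) * Nat.choose i (k+1) + Nat.choose n (2*i) * Nat.choose i k) := by
    intro i _
    rw [Nat.choose_succ_succ n (2*i), Nat.choose_succ_succ i k, add_mul, mul_add]
    ring
  unfold Of
  rw [Finset.sum_congr rfl hterm, Finset.sum_add_distrib, Finset.sum_add_distrib]
  have h1 : (∑ i ∈ Finset.range (n+2), Nat.choose n (2*i+1) * Nat.choose (i+1) (k+1))
      = Of n (k+1) := by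
    unfold Of
    rw [Finset.sum_range_succ]
    have : Nat.choose n (2*(n+1)+1) = 0 := Nat.choose_eq_zero_of_lt (by omega)
    simp [this]
  have h2 : (∑ i ∈ Finset.range (n+2), Nat.choose n (2*i) * Nat.choose i (k+1))
      = Ef n (k+1) := by
    unfold Ef
    rw [Finset.sum_range_succ]
    have : Nat.choose n (2*(n+1)) = 0 := Nat.choose_eq_zero_of_lt (by omega)
    simp [this]
  have h3 : (∑ i ∈ Finset.range (n+2), Nat.choose n (2*i) * Nat.choose i k)
      = Ef n k := by
    unfold Ef
    rw [Finset.sum_range_succ]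
    have : Nat.choose n (2*(n+1)) = 0 := Nat.choose_eq_zero_of_lt (by omega)
    simp [this]
  rw [h1, h2, h3,
    show (∑ i ∈ Finset.range (n+1), Nat.choose n (2*i+1) * Nat.choose (i+1) (k+1)) = Of n (k+1)
      from rfl]
  ring

private lemma Of_succ_zero (n : ℕ) : Of (n+1) 0 = Of n 0 + Ef n 0 := by
  have hterm : ∀ i, i ∈ Finset.range (n+2) →
      Nat.choose (n+1) (2*i+1) * Nat.choose (i+1) 0
      = Nat.choose n (2*i+1) * Nat.choose (i+1) 0 + Nat.choose n (2*i) * Nat.choose i 0 := by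
    intro i _
    rw [Nat.choose_succ_succ n (2*i), Nat.choose_zero_right, Nat.choose_zero_right, add_mul]
    ring
  unfold Of
  rw [Finset.sum_congr rfl hterm, Finset.sum_add_distrib]
  have h1 : (∑ i ∈ Finset.range (n+2), Nat.choose n (2*i+1) * Nat.choose (i+1) 0)
      = Of n 0 := by
    unfold Of
    rw [Finset.sum_range_succ]
    have : Nat.choose n (2*(n+1)+1) = 0 := Nat.choose_eq_zero_of_lt (by omega)
    simp [this]
  have h3 : (∑ i ∈ Finset.range (n+2), Nat.choose n (2*i) * Nat.choose i 0)
      = Ef n 0 := by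
    unfold Ef
    rw [Finset.sum_range_succ]
    have : Nat.choose n (2*(n+1)) = 0 := Nat.choose_eq_zero_of_lt (by omega)
    simp [this]
  rw [h1, h3,
    show (∑ i ∈ Finset.range (n+1), Nat.choose n (2*i+1) * Nat.choose (i+1) 0) = Of n 0
      from rfl]

private lemma Ef_diag (k : ℕ) : Ef (2*k+2) (k+1) = 1 := by
  unfold Ef
  rw [Finset.sum_eq_single_of_mem (k+1)]
  · rw [show 2*(k+1) = 2*k+2 by ring, Nat.choose_self, Nat.choose_self]
  · exact Finset.mem_range.mpr (by omega)
  · intro b _ hb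
    rcases lt_or_gt_of_ne hb with h | h
    · have : Nat.choose b (k+1) = 0 := Nat.choose_eq_zero_of_lt (by omega)
      simp [this]
    · have : Nat.choose (2*k+2) (2*b) = 0 := Nat.choose_eq_zero_of_lt (by omega)
      simp [this]

private lemma Ef_rec (n k : ℕ) :
    Ef (n+2) (k+1) = 2 * Ef (n+1) (k+1) + Ef n k := by
  have h1 := Ef_succ (n+1) (k+1)
  rw [show n+1+1 = n+2 from rfl] at h1
  have h2 := Of_succ n k
  have h3 := Ef_succ n (k+1)
  omega

private lemma EO (n : ℕ) : Ef n 0 + Of n 0 = 2^n := by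
  induction n with
  | zero => simp [Ef, Of]
  | succ m ih =>
    have h1 := Ef_succ m 0
    have h2 := Of_succ_zero m
    have h : Ef (m+1) 0 + Of (m+1) 0 = 2 * (Ef m 0 + Of m 0) := by omega
    rw [h, ih]
    ring

private lemma Ef_zero_succ (n : ℕ) : Ef (n+1) 0 = 2^n := by
  rw [Ef_succ, EO]

private lemma main_lemma : ∀ e k : ℕ, k ≤ e →
    2^(2*k+2) * Ef (e+k+2) (k+1)
      = 2^(e+k+1) * (Nat.choose (e+1) (k+1) + Nat.choose e k) := by
  intro e
  induction e with
  | zero =>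
    intro k hk
    interval_cases k
    have h : Ef 2 1 = 1 := Ef_diag 0
    norm_num [h]
  | succ m ih =>
    intro k hk
    rcases Nat.eq_or_lt_of_le hk with heq | hlt
    · subst heq
      have hd : Ef (m+1+(m+1)+2) (m+1+1) = 1 := by
        rw [show m+1+(m+1)+2 = 2*(m+1)+2 by ring]
        exact Ef_diag (m+1)
      rw [hd, Nat.choose_self, Nat.choose_self]
      rw [show 2*(m+1)+2 = (m+1+(m+1)+1)+1 by ring, pow_succ]
      ring
    · have hk' : k ≤ m := by omega
      have hrec : Ef (m+1+k+2) (k+1) = 2 * Ef (m+k+2) (k+1) + Ef (m+k+1) k := by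
        have h := Ef_rec (m+k+1) k
        rw [show m+k+1+2 = m+1+k+2 by ring, show m+k+1+1 = m+k+2 by ring] at h
        exact h
      have ih1 := ih k hk'
      rw [hrec]
      rcases k with _ | k'
      · have hv : Ef (m+0+1) 0 = 2^m := by
          rw [show m+0+1 = m+1 from rfl]; exact Ef_zero_succ m
        rw [hv]
        have hc2 : Nat.choose (m+1+1) (0+1) = m+2 := by simp
        have hc1 : Nat.choose (m+1) (0+1) = m+1 := by simp
        have hc0' : Nat.choose m 0 = 1 := Nat.choose_zero_right _
        rw [hc2, Nat.choose_zero_right]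
        rw [hc1, hc0'] at ih1
        zify at ih1 ⊢
        linear_combination 2*ih1
      · have ih2 := ih k' (by omega)
        have p1 : Nat.choose (m+1+1) (k'+1+1)
            = Nat.choose (m+1) (k'+1) + Nat.choose (m+1) (k'+1+1) :=
          Nat.choose_succ_succ (m+1) (k'+1)
        have p2 : Nat.choose (m+1) (k'+1) = Nat.choose m k' + Nat.choose m (k'+1) :=
          Nat.choose_succ_succ m k'
        have hE : Ef (m+(k'+1)+1) (k'+1) = Ef (m+k'+2) (k'+1) := by
          rw [show m+(k'+1)+1 = m+k'+2 by ring]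
        rw [hE]
        zify at ih1 ih2 p1 p2 ⊢
        linear_combination 2*ih1 + 4*ih2 - (2:ℤ)^(m+k'+3)*p1 - (2:ℤ)^(m+k'+3)*p2

private lemma Icc_eq_Ef (n k : ℕ) :
    (∑ i ∈ Finset.Icc k (n / 2), Nat.choose n (2 * i) * Nat.choose i k) = Ef n k := by
  unfold Ef
  apply Finset.sum_subset
  · intro i hi
    simp only [Finset.mem_Icc] at hi
    have : n / 2 ≤ n := Nat.div_le_self n 2
    exact Finset.mem_range.mpr (by omega)
  · intro i hi hni
    simp only [Finset.mem_Icc, not_and, not_le] at hni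
    rcases le_or_gt k i with h | h
    · have h2 : n / 2 < i := hni h
      have : Nat.choose n (2*i) = 0 := Nat.choose_eq_zero_of_lt (by omega)
      simp [this]
    · have : Nat.choose i k = 0 := Nat.choose_eq_zero_of_lt h
      simp [this]

theorem stmt_2 (n k : ℕ) (hn : 1 ≤ n) (hk : k ≤ n / 2) :
    (n - k) * 2 ^ (2 * k + 1) *
        (∑ i ∈ Finset.Icc k (n / 2), Nat.choose n (2 * i) * Nat.choose i k) =
      n * 2 ^ n * Nat.choose (n - k) k := by
  rw [Icc_eq_Ef n k]
  rcases k with _ | k'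
  · obtain ⟨m, rfl⟩ : ∃ m, n = m + 1 := ⟨n - 1, by omega⟩
    rw [Ef_zero_succ]
    simp only [Nat.sub_zero, Nat.choose_zero_right, mul_one]
    rw [pow_succ]
    ring
  · have h2k : 2 * (k'+1) ≤ n := by omega
    obtain ⟨e, he⟩ : ∃ e, n = e + k' + 2 := ⟨n - k' - 2, by omega⟩
    subst he
    have hek : k' ≤ e := by omega
    have hml := main_lemma e k' hek
    have hnk : e + k' + 2 - (k'+1) = e + 1 := by omega
    rw [hnk]
    have key : (e+1) * Nat.choose e k' = Nat.choose (e+1) (k'+1) * (k'+1) :=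
      Nat.add_one_mul_choose_eq e k'
    zify at hml key ⊢
    linear_combination 2*(e+1)*hml + (2:ℤ)^(e+k'+2)*key
end

section
/- Let α and β be complex numbers such that αⁿ + βⁿ is an integer for every natural number n ≥ 1. Then α + β and αβ are both integers; that is, α and β are the roots of a monic quadratic polynomial with integer coefficients. -/
/-!
With `s = α + β` and `p = α β`, the power sums give `2 p = s² - (α² + β²)` and
`2 p² = (α² + β²)² - (α⁴ + β⁴)`, both integers. Then `m = 2 p` is an integer with `m² = 2 (2 p²)`
even, so `m` is even and `p = m / 2` is an integer.
-/

theorem exists_int_eq_of_two_mul_eq_int_of_two_mul_sq_eq_int {R : Type*} [Ring R]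
    [NoZeroDivisors R] [CharZero R] {x : R} {m k : ℤ} (hm : 2 * x = m) (hk : 2 * x ^ 2 = k) :
    ∃ t : ℤ, x = t := by
  have hmk : m ^ 2 = 2 * k := by
    have : ((m ^ 2 : ℤ) : R) = ((2 * k : ℤ) : R) := by
      push_cast
      rw [← hm, ← hk]
      noncomm_ring
    exact_mod_cast this
  obtain ⟨t, rfl⟩ : (2 : ℤ) ∣ m := Int.Prime.dvd_pow' Nat.prime_two ⟨k, hmk⟩
  refine ⟨t, mul_left_cancel₀ (two_ne_zero : (2 : R) ≠ 0) ?_⟩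
  rw [hm]
  push_cast
  rfl

theorem stmt_3 (α β : ℂ) (h : ∀ n : ℕ, 1 ≤ n → ∃ z : ℤ, α ^ n + β ^ n = z) :
    (∃ a : ℤ, α + β = a) ∧ (∃ b : ℤ, α * β = b) := by
  obtain ⟨z₁, h₁⟩ := h 1 le_rfl
  obtain ⟨z₂, h₂⟩ := h 2 (by norm_num)
  obtain ⟨z₄, h₄⟩ := h 4 (by norm_num)
  rw [pow_one, pow_one] at h₁
  refine ⟨⟨z₁, h₁⟩, exists_int_eq_of_two_mul_eq_int_of_two_mul_sq_eq_int
    (m := z₁ ^ 2 - z₂) (k := z₂ ^ 2 - z₄) ?_ ?_⟩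
  · push_cast
    linear_combination (α + β + z₁) * h₁ - h₂
  · push_cast
    linear_combination (α ^ 2 + β ^ 2 + z₂) * h₂ - h₄
end

section
/- Let α and β be complex numbers such that αⁿ − βⁿ is an integer for every natural number n ≥ 1. Then either α = β, or both α and β are integers (i.e., both are integer-valued real numbers). -/
/-!
From `n = 1`, `α - β = m ∈ ℤ`; if `m ≠ 0`, then `n = 2` gives `m (α + β) ∈ ℤ`, so `α` and `β` are
rational with a common denominator `D`. If a prime `p` divided `D`, then writing `β = y / D`,
`α = (y + m D) / D` with `p ∤ y`, the integer `(y + m D)ⁿ - yⁿ` would be divisible by `pⁿ`. For `p ∤ n`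
the geometric sum `∑ (y + m D)ⁱ yⁿ⁻¹⁻ⁱ ≡ n yⁿ⁻¹` is prime to `p`, so `pⁿ ∣ m D`, impossible for large `n`.
-/

theorem pow_dvd_sub_of_pow_dvd_pow_sub_pow {R : Type*} [CommRing R] [IsDomain R] {p x y : R}
    (hp : Prime p) (hxy : p ∣ x - y) (hx : ¬p ∣ x) {n k : ℕ} (hn : ¬p ∣ n)
    (h : p ^ k ∣ x ^ n - y ^ n) : p ^ k ∣ x - y :=
  hp.pow_dvd_of_dvd_mul_left k (not_dvd_geom_sum₂ hp hxy hx hn) (by rwa [geom_sum₂_mul])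

theorem Rat.den_pow_dvd_add_pow_sub_pow {q : ℚ} {m z : ℤ} {n : ℕ}
    (h : (q + m) ^ n - q ^ n = z) :
    (q.den : ℤ) ^ n ∣ (q.num + m * q.den) ^ n - q.num ^ n := by
  refine ⟨z, ?_⟩
  have key : ((q.num + m * q.den : ℤ) : ℚ) ^ n - (q.num : ℚ) ^ n = (q.den : ℚ) ^ n * z := by
    rw [← h, mul_sub, ← mul_pow, ← mul_pow, mul_add, mul_comm _ q, Rat.mul_den_eq_num]
    push_cast; ring
  exact_mod_cast key

theorem Rat.den_eq_one_of_add_pow_sub_pow {q : ℚ} {m : ℤ} (hm : m ≠ 0)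
    (h : ∀ n : ℕ, 1 ≤ n → ∃ z : ℤ, (q + m) ^ n - q ^ n = z) : q.den = 1 := by
  by_contra hden
  set p := q.den.minFac
  have hp : p.Prime := Nat.minFac_prime hden
  have hpden : (p : ℤ) ∣ q.den := Int.natCast_dvd_natCast.mpr (Nat.minFac_dvd _)
  have hpnum : ¬(p : ℤ) ∣ q.num := fun hdvd =>
    hp.one_lt.ne' <| Nat.dvd_one.mp <| q.reduced ▸
      Nat.dvd_gcd (Int.natCast_dvd.mp hdvd) (Nat.minFac_dvd _)
  set d := m * q.den
  have hd : d ≠ 0 := mul_ne_zero hm (by exact_mod_cast q.den_nz)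
  -- `n ≡ 1 [MOD p]` keeps `p` out of the geometric sum, and `n > |d|` makes `p ^ n ∣ d` absurd.
  set n := d.natAbs * p + 1
  have hpn : ¬(p : ℤ) ∣ (n : ℤ) := by
    rw [Int.natCast_dvd_natCast, Nat.dvd_add_right (dvd_mul_left _ _)]
    exact hp.not_dvd_one
  obtain ⟨z, hz⟩ := h n (Nat.le_add_left 1 _)
  have hpd : (p : ℤ) ∣ d := hpden.mul_left m
  have hpx : ¬(p : ℤ) ∣ q.num + d := fun h' => hpnum ((dvd_add_left hpd).mp h')
  have hdvd : (p : ℤ) ^ n ∣ d := by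
    simpa using pow_dvd_sub_of_pow_dvd_pow_sub_pow (Nat.prime_iff_prime_int.mp hp)
      (by simpa using hpd) hpx hpn
      ((pow_dvd_pow_of_dvd hpden n).trans (Rat.den_pow_dvd_add_pow_sub_pow hz))
  have hle : p ^ n ≤ d.natAbs :=
    Nat.le_of_dvd (Int.natAbs_pos.mpr hd) (by exact_mod_cast Int.natCast_dvd.mp hdvd)
  have hlt : d.natAbs < p ^ n := calc
    d.natAbs < n := Nat.lt_succ_of_le (Nat.le_mul_of_pos_right _ hp.pos)
    _ < p ^ n := Nat.lt_pow_self hp.one_lt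
  omega

theorem eq_ratCast_of_add_sq_sub_sq {K : Type*} [Field K] [CharZero K] {β : K} {m z : ℤ}
    (hm : m ≠ 0) (h : (β + m) ^ 2 - β ^ 2 = z) : β = ((z - m ^ 2) / (2 * m) : ℚ) := by
  have hm' : (2 * m : K) ≠ 0 := by exact_mod_cast mul_ne_zero two_ne_zero hm
  push_cast
  rw [eq_div_iff hm']
  linear_combination h

theorem stmt_4 (α β : ℂ) (h : ∀ n : ℕ, 1 ≤ n → ∃ z : ℤ, α ^ n - β ^ n = z) :
    α = β ∨ ((∃ a : ℤ, α = a) ∧ (∃ b : ℤ, β = b)) := by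
  obtain ⟨m, hm⟩ := h 1 le_rfl
  have hα : α = β + m := by linear_combination hm
  rcases eq_or_ne m 0 with rfl | hm0
  · simp [hα]
  obtain ⟨z, hz⟩ := h 2 one_le_two
  set q : ℚ := (z - m ^ 2) / (2 * m)
  have hβ : β = q := eq_ratCast_of_add_sq_sub_sq hm0 (hα ▸ hz)
  have hq : q.den = 1 := Rat.den_eq_one_of_add_pow_sub_pow hm0 fun n hn => by
    obtain ⟨z, hz⟩ := h n hn
    rw [hα, hβ] at hz
    exact ⟨z, by exact_mod_cast hz⟩
  have hβ' : β = q.num := by rw [hβ, ← (Rat.den_eq_one_iff q).mp hq]; simp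
  exact .inr ⟨⟨q.num + m, by rw [hα, hβ']; push_cast; ring⟩, ⟨q.num, hβ'⟩⟩
end

section
/- If α and β are two distinct rational numbers, not both of which are integers, then αⁿ − βⁿ cannot be an integer for every natural number n ≥ 1; i.e., there exists some n ≥ 1 such that αⁿ − βⁿ is not an integer. -/
private lemma binom_aux (b m : ℤ) : ∀ n : ℕ, ∃ k : ℤ,
    (b + m) ^ (n + 1) = b ^ (n + 1) + ((n : ℤ) + 1) * b ^ n * m + m ^ 2 * k := by
  intro n
  induction n with
  | zero => exact ⟨0, by ring⟩
  | succ n ih =>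
    obtain ⟨k, hk⟩ := ih
    refine ⟨b * k + ((n : ℤ) + 1) * b ^ n + m * k, ?_⟩
    have h : (b + m) ^ (n + 1 + 1) = (b + m) ^ (n + 1) * (b + m) := by ring
    rw [h, hk]
    push_cast
    ring

theorem stmt_5 (α β : ℚ) (hne : α ≠ β)
    (hnotint : ¬ ((∃ a : ℤ, α = a) ∧ (∃ b : ℤ, β = b))) :
    ∃ n : ℕ, 1 ≤ n ∧ ¬ ∃ z : ℤ, α ^ n - β ^ n = z := by
  by_contra hcon
  push_neg at hcon
  obtain ⟨d, hd⟩ := hcon 1 le_rfl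
  simp only [pow_one] at hd
  set q : ℕ := α.den with hqdef
  have hq0 : (q : ℚ) ≠ 0 := by positivity
  have hα : (α : ℚ) = (α.num : ℚ) / q := (Rat.num_div_den α).symm
  -- denominators are equal
  have hcop : IsCoprime (α.num - d * (q : ℤ)) (q : ℤ) := by
    have h1 : IsCoprime α.num (q : ℤ) := by
      rw [Int.isCoprime_iff_gcd_eq_one]
      exact α.reduced
    have h2 := h1.add_mul_left_left (-d)
    simpa [mul_comm, sub_eq_add_neg, neg_mul, mul_neg] using h2
  have hβeq : (β : ℚ) = ((α.num - d * (q : ℤ) : ℤ) : ℚ) / ((q : ℤ) : ℚ) := by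
    have hβ : β = α - d := by linarith
    rw [hβ, eq_div_iff (by positivity : ((q:ℤ):ℚ) ≠ 0)]
    push_cast
    rw [sub_mul]
    rw [Rat.mul_den_eq_num]
  have hden : (β.den : ℤ) = (q : ℤ) := by
    rw [hβeq]
    exact Rat.den_div_eq_of_coprime (by exact_mod_cast Nat.pos_of_ne_zero α.den_nz)
      (Int.isCoprime_iff_gcd_eq_one.mp hcop)
  have hdenN : β.den = q := by exact_mod_cast hden
  -- q ≠ 1
  have hq1 : q ≠ 1 := by
    intro h1
    exact hnotint ⟨⟨α.num, ((Rat.den_eq_one_iff α).mp h1).symm⟩,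
      ⟨β.num, ((Rat.den_eq_one_iff β).mp (by rw [hdenN, h1])).symm⟩⟩
  obtain ⟨p, hp, hpq⟩ := Nat.exists_prime_and_dvd hq1
  haveI : Fact p.Prime := ⟨hp⟩
  set a : ℤ := α.num
  set b : ℤ := β.num
  have hβ : (β : ℚ) = (b : ℚ) / q := by rw [← Rat.num_div_den β, hdenN]
  -- key divisibility
  have key : ∀ n : ℕ, 1 ≤ n → ((q : ℤ)) ^ n ∣ a ^ n - b ^ n := by
    intro n hn
    obtain ⟨z, hz⟩ := hcon n hn
    rw [hα, hβ, div_pow, div_pow, div_sub_div_same, div_eq_iff (by positivity)] at hz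
    refine ⟨z, ?_⟩
    have h2 : (a : ℚ) ^ n - (b : ℚ) ^ n = ((q:ℚ)) ^ n * z := by rw [hz]; ring
    exact_mod_cast h2
  -- m = a - b
  set m : ℤ := a - b with hmdef
  have hqm : (q : ℤ) ∣ m := by
    have h1 : (a : ℚ) - b = d * q := by
      rw [← hd] at *
      rw [hα, hβ] at *
      field_simp
    refine ⟨d, ?_⟩
    have : (a : ℚ) - b = q * d := by linarith
    exact_mod_cast this
  have hm0 : m ≠ 0 := by
    intro h
    apply hne
    rw [hα, hβ]
    have : a = b := by omega
    rw [this]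
  have hpm : (p : ℤ) ∣ m := dvd_trans (Int.natCast_dvd_natCast.mpr hpq) hqm
  set e : ℕ := padicValNat p m.natAbs with hedef
  have he1 : 1 ≤ e := by
    by_contra h
    have he0 : e = 0 := by omega
    have h2 := pow_succ_padicValNat_not_dvd (p := p) (Int.natAbs_ne_zero.mpr hm0)
    rw [← hedef, he0, pow_one] at h2
    exact h2 (Int.natCast_dvd.mp hpm)
  have hpe : (p : ℤ) ^ e ∣ m := by
    have := pow_padicValNat_dvd (p := p) (n := m.natAbs)
    rw [← Int.natAbs_dvd_natAbs]
    simpa [Int.natAbs_pow] using this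
  have hpe1 : ¬ (p : ℤ) ^ (e + 1) ∣ m := by
    have := pow_succ_padicValNat_not_dvd (p := p) (Int.natAbs_ne_zero.mpr hm0)
    rw [← Int.natAbs_dvd_natAbs]
    simpa [Int.natAbs_pow] using this
  -- choose n
  set n : ℕ := if p ∣ e + 1 then e + 2 else e + 1 with hndef
  have hn1 : 1 ≤ n := by rw [hndef]; split <;> omega
  have hne1 : e + 1 ≤ n := by rw [hndef]; split <;> omega
  have hpn : ¬ p ∣ n := by
    rw [hndef]
    split
    · rename_i h
      intro h2
      exact hp.prime.not_dvd_one (by simpa using Nat.dvd_sub h2 h)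
    · rename_i h
      exact h
  -- binomial expansion
  obtain ⟨k, hk⟩ := binom_aux b m (n - 1)
  have hn' : n - 1 + 1 = n := by omega
  rw [hn'] at hk
  have hab : b + m = a := by rw [hmdef]; ring
  rw [hab] at hk
  have hcast : ((n - 1 : ℕ) : ℤ) + 1 = (n : ℤ) := by
    have : ((n - 1 : ℕ) : ℤ) = (n : ℤ) - 1 := by
      omega
    omega
  rw [hcast] at hk
  -- p^(e+1) divides a^n - b^n
  have hdvd1 : (p : ℤ) ^ (e + 1) ∣ a ^ n - b ^ n := by
    have h1 : (p : ℤ) ^ n ∣ a ^ n - b ^ n := by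
      refine dvd_trans (pow_dvd_pow_of_dvd (Int.natCast_dvd_natCast.mpr hpq) n) (key n hn1)
    exact dvd_trans (pow_dvd_pow _ hne1) h1
  have hdvd2 : (p : ℤ) ^ (e + 1) ∣ m ^ 2 * k := by
    refine Dvd.dvd.mul_right ?_ k
    calc (p : ℤ) ^ (e + 1) ∣ (p : ℤ) ^ (2 * e) := pow_dvd_pow _ (by omega)
    _ ∣ m ^ 2 := by rw [two_mul, pow_add, pow_two]; exact mul_dvd_mul hpe hpe
  have hdvd3 : (p : ℤ) ^ (e + 1) ∣ (n : ℤ) * b ^ (n - 1) * m := by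
    have : a ^ n - b ^ n = (n : ℤ) * b ^ (n - 1) * m + m ^ 2 * k := by
      rw [hk]; ring
    have h4 : (p : ℤ) ^ (e + 1) ∣ ((n : ℤ) * b ^ (n - 1) * m + m ^ 2 * k) := by
      rw [← this]; exact hdvd1
    have h5 := dvd_sub h4 hdvd2
    simpa using h5
  -- coprimality to cancel n * b^(n-1)
  have hpb : ¬ (p : ℤ) ∣ b := by
    intro h
    have h1 : p ∣ b.natAbs := Int.natCast_dvd.mp h
    have h2 : p ∣ Nat.gcd b.natAbs β.den := Nat.dvd_gcd h1 (hdenN ▸ hpq)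
    rw [β.reduced] at h2
    exact hp.prime.not_dvd_one h2
  have hcop2 : IsCoprime ((p : ℤ) ^ (e + 1)) ((n : ℤ) * b ^ (n - 1)) := by
    have c1 : IsCoprime (p : ℤ) (n : ℤ) := by
      rw [Int.isCoprime_iff_gcd_eq_one, Int.gcd_natCast_natCast]
      exact (Nat.Prime.coprime_iff_not_dvd hp).mpr hpn
    have c2 : IsCoprime (p : ℤ) b := by
      rw [Int.isCoprime_iff_gcd_eq_one]
      have : Nat.Coprime p b.natAbs := (Nat.Prime.coprime_iff_not_dvd hp).mpr
        (fun h => hpb (Int.natCast_dvd.mpr h))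
      simpa [Int.gcd] using this
    exact (c1.mul_right c2.pow_right).pow_left
  have hfinal : (p : ℤ) ^ (e + 1) ∣ m := hcop2.dvd_of_dvd_mul_left hdvd3
  exact hpe1 hfinal
end

section
/- Let x and y be integers with gcd(x, y) = 1 and let p be a prime number. Then the gcd of x − y and P_p(x, y) = Σ_{i=0}^{p−1} x^{p−1−i} y^i is either 1 or p. -/
open Finset

/- Modulo a common divisor `d` of `x - y` and the geometric sum, `x ≡ y`, so the sum is
`≡ n * y ^ (n - 1)`; and `d` is coprime to `y` because `x - y` is. -/
theorem IsCoprime.dvd_natCast_of_dvd_sub_of_dvd_geom_sum₂ {R : Type*} [CommRing R] {x y d : R}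
    {n : ℕ} (hxy : IsCoprime x y) (hd : d ∣ x - y)
    (hsum : d ∣ ∑ i ∈ range n, x ^ i * y ^ (n - 1 - i)) : d ∣ (n : R) := by
  have hdy : IsCoprime d y :=
    (IsCoprime.sub_mul_left_left_iff.mpr hxy : IsCoprime (x - y * 1) y).of_isCoprime_of_dvd_left
      (by simpa using hd)
  exact hdy.pow_right.dvd_of_dvd_mul_right ((dvd_geom_sum₂_iff_of_dvd_sub hd).mp hsum)

theorem stmt_6 (x y : ℤ) (hxy : Int.gcd x y = 1) (p : ℕ) (hp : Nat.Prime p) :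
    Int.gcd (x - y) (∑ i ∈ Finset.range p, x ^ (p - 1 - i) * y ^ i) = 1 ∨
      Int.gcd (x - y) (∑ i ∈ Finset.range p, x ^ (p - 1 - i) * y ^ i) = p := by
  have hsum : ∑ i ∈ range p, x ^ (p - 1 - i) * y ^ i = ∑ i ∈ range p, x ^ i * y ^ (p - 1 - i) := by
    rw [← geom_sum₂_comm y x p]
    exact sum_congr rfl fun _ _ ↦ mul_comm _ _
  rw [hsum]
  apply hp.eq_one_or_self_of_dvd
  exact Int.natCast_dvd_natCast.mp <|
    (Int.isCoprime_iff_gcd_eq_one.mpr hxy).dvd_natCast_of_dvd_sub_of_dvd_geom_sum₂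
      (Int.gcd_dvd_left _ _) (Int.gcd_dvd_right _ _)
end

section
/- Let p and q be integers and let r, s ∈ ℂ be the roots of z² − pz − q = 0 with r ≠ s. Then for every natural number n ≥ 0, (r^{n+1} − s^{n+1})/(r − s) = Σ_{k=0}^{⌊n/2⌋} C(n−k, k) · p^{n−2k} · q^k. -/
open Finset

private def T (p q : ℂ) (n k : ℕ) : ℂ :=
  (Nat.choose (n - k) k : ℂ) * p ^ (n - 2 * k) * q ^ k

private lemma aux_ext (p q : ℂ) (n m : ℕ) (h : n / 2 + 1 ≤ m) :
    ∑ k ∈ range (n / 2 + 1), T p q n k = ∑ k ∈ range m, T p q n k := by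
  apply Finset.sum_subset (Finset.range_subset_range.mpr h)
  intro k hk hk'
  simp only [Finset.mem_range] at hk hk'
  have h1 : n - k < k := by omega
  simp [T, Nat.choose_eq_zero_of_lt h1]

private lemma aux_rec (p q : ℂ) (n : ℕ) :
    ∑ k ∈ range ((n + 2) / 2 + 1), T p q (n + 2) k
      = p * ∑ k ∈ range ((n + 1) / 2 + 1), T p q (n + 1) k
        + q * ∑ k ∈ range (n / 2 + 1), T p q n k := by
  rw [aux_ext p q (n+2) (n+2) (by omega), aux_ext p q (n+1) (n+2) (by omega),
      aux_ext p q n (n+1) (by omega)]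
  rw [Finset.sum_range_succ' (fun k => T p q (n+2) k) (n+1),
      Finset.sum_range_succ' (fun k => T p q (n+1) k) (n+1)]
  have key : ∀ j ∈ range (n+1),
      T p q (n+2) (j+1) = p * T p q (n+1) (j+1) + q * T p q n j := by
    intro j hj
    simp only [Finset.mem_range] at hj
    simp only [T]
    have e1 : n + 2 - (j+1) = (n - j) + 1 := by omega
    have e2 : n + 1 - (j+1) = n - j := by omega
    have e3 : n + 2 - 2*(j+1) = n - 2*j := by omega
    rw [e1, e2, e3, Nat.choose_succ_succ' (n - j) j]
    push_cast
    rcases le_or_gt (2*j+1) n with h | h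
    · obtain ⟨d, hd1, hd2⟩ : ∃ d, n - 2*j = d + 1 ∧ n + 1 - 2*(j+1) = d :=
        ⟨n - 2*j - 1, by omega, by omega⟩
      rw [hd1, hd2, pow_succ]
      ring
    · have c0 : Nat.choose (n - j) (j+1) = 0 :=
        Nat.choose_eq_zero_of_lt (by omega)
      rw [c0]
      push_cast
      ring
  rw [Finset.sum_congr rfl key, Finset.sum_add_distrib, ← Finset.mul_sum, ← Finset.mul_sum]
  simp only [T]
  simp [pow_succ]
  ring

theorem stmt_9 (p q : ℤ) (r s : ℂ) (hsum : r + s = p) (hprod : r * s = -q)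
    (hne : r ≠ s) :
    ∀ n : ℕ,
      (r ^ (n + 1) - s ^ (n + 1)) / (r - s) =
        ∑ k ∈ Finset.range (n / 2 + 1),
          (Nat.choose (n - k) k : ℂ) * (p : ℂ) ^ (n - 2 * k) * (q : ℂ) ^ k := by
  have hrs : r - s ≠ 0 := sub_ne_zero.mpr hne
  have hq : (q : ℂ) = -(r * s) := by rw [hprod]; ring
  intro n
  induction n using Nat.strong_induction_on with
  | _ n ih =>
    match n with
    | 0 =>
      simp [div_eq_iff hrs]
    | 1 =>
      have h2 : r ^ 2 - s ^ 2 = (r + s) * (r - s) := by ring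
      simp [div_eq_iff hrs, h2, hsum]
    | (m + 2) =>
      have h1 : (r ^ (m + 1 + 1) - s ^ (m + 1 + 1)) / (r - s)
          = ∑ k ∈ range ((m + 1) / 2 + 1), T (p : ℂ) (q : ℂ) (m + 1) k :=
        ih (m + 1) (by omega)
      have h0 : (r ^ (m + 1) - s ^ (m + 1)) / (r - s)
          = ∑ k ∈ range (m / 2 + 1), T (p : ℂ) (q : ℂ) m k :=
        ih m (by omega)
      show (r ^ (m + 2 + 1) - s ^ (m + 2 + 1)) / (r - s)
          = ∑ k ∈ range ((m + 2) / 2 + 1), T (p : ℂ) (q : ℂ) (m + 2) k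
      rw [aux_rec, ← h1, ← h0, ← hsum, hq]
      field_simp
      ring
end

section
/- For all natural numbers n ≥ 0 and all k with 0 ≤ k ≤ ⌊n/2⌋, the identity Σ_{i=k}^{⌊n/2⌋} C(n+1, 2i+1) · C(i, k) = 2^{n−2k} · C(n−k, k) holds. -/
/-!
Write `S n k` (`oddChooseSum n k`) for the left-hand side summed over all `i`. Both `S` and
`2^(n-2k) C(n-k, k)` satisfy `S (n+2) (k+1) = 2 S (n+1) (k+1) + S n k`, with `S n 0 = 2^n`
(the sum of the odd-indexed binomial coefficients of row `n+1`) and `S 0 (k+1) = S 1 (k+1) = 0`.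
For the sum, the recurrence comes from `C(n+3, j+2) - 2 C(n+2, j+2) = C(n+1, j) - C(n+1, j+2)`
together with Pascal's rule `C(i+1, k+1) = C(i, k) + C(i, k+1)`: the terms
`C(n+1, 2i+1) C(i, k+1)` telescope.
-/

open Finset Nat

theorem Finset.sum_range_two_mul {M : Type*} [AddCommMonoid M] (f : ℕ → M) (N : ℕ) :
    ∑ j ∈ range (2 * N), f j = ∑ i ∈ range N, (f (2 * i) + f (2 * i + 1)) := by
  induction N with
  | zero => simp
  | succ N ih =>
    rw [show 2 * (N + 1) = 2 * N + 1 + 1 by ring, sum_range_succ, sum_range_succ, sum_range_succ,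
      ih, add_assoc]

theorem Nat.sum_range_choose_two_mul_add_one (n : ℕ) :
    ∑ i ∈ range (n + 1), (n + 1).choose (2 * i + 1) = 2 ^ n := by
  have hvanish : ∑ j ∈ range (2 * (n + 1)), n.choose j = ∑ j ∈ range (n + 1), n.choose j :=
    (sum_subset (range_subset_range.2 (by omega)) fun j _ hj ↦
      choose_eq_zero_of_lt (by simpa using hj)).symm
  simp only [choose_succ_succ']
  rw [← sum_range_two_mul, hvanish, sum_range_choose]

def oddChooseSum (n k : ℕ) : ℕ :=
  ∑ i ∈ range (n + 1), (n + 1).choose (2 * i + 1) * i.choose k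

theorem oddChooseSum_zero_right (n : ℕ) : oddChooseSum n 0 = 2 ^ n := by
  simp only [oddChooseSum, choose_zero_right, mul_one, sum_range_choose_two_mul_add_one]

theorem oddChooseSum_eq_sum_range {n N : ℕ} (k : ℕ) (hN : n < 2 * N) :
    oddChooseSum n k = ∑ i ∈ range N, (n + 1).choose (2 * i + 1) * i.choose k := by
  have hmono : ∀ N M, n < 2 * N → N ≤ M →
      ∑ i ∈ range N, (n + 1).choose (2 * i + 1) * i.choose k =
        ∑ i ∈ range M, (n + 1).choose (2 * i + 1) * i.choose k := fun N M hN hNM ↦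
    sum_subset (range_subset_range.2 hNM) fun i _ hi ↦ by
      rw [choose_eq_zero_of_lt (by rw [mem_range] at hi; omega), zero_mul]
  rcases le_total N (n + 1) with h | h
  · exact (hmono N (n + 1) hN h).symm
  · exact hmono (n + 1) N (by omega) h

theorem oddChooseSum_add_two_add_one (n k : ℕ) :
    oddChooseSum (n + 2) (k + 1) = 2 * oddChooseSum (n + 1) (k + 1) + oddChooseSum n k := by
  have hshift : ∀ m, m ≤ 2 * n + 4 → oddChooseSum m (k + 1) =
      ∑ i ∈ range (n + 2), (m + 1).choose (2 * (i + 1) + 1) * (i + 1).choose (k + 1) := by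
    intro m hm
    rw [oddChooseSum_eq_sum_range (N := n + 3) _ (by omega), sum_range_succ']
    simp
  set f : ℕ → ℕ := fun i ↦ (n + 1).choose (2 * i + 1) * i.choose (k + 1)
  have hterm : ∀ i, (n + 3).choose (2 * (i + 1) + 1) * (i + 1).choose (k + 1) + f (i + 1) =
      2 * ((n + 2).choose (2 * (i + 1) + 1) * (i + 1).choose (k + 1)) +
        (n + 1).choose (2 * i + 1) * i.choose k + f i := by
    intro i
    simp only [f, show 2 * (i + 1) + 1 = 2 * i + 1 + 1 + 1 by ring, choose_succ_succ' (n + 2),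
      choose_succ_succ' (n + 1), choose_succ_succ' i]
    ring
  have htelescope : ∑ i ∈ range (n + 2), f (i + 1) = ∑ i ∈ range (n + 2), f i := by
    have h0 : f 0 = 0 := by simp [f]
    have hN : f (n + 2) = 0 := by
      simp [f, choose_eq_zero_of_lt (show n + 1 < 2 * (n + 2) + 1 by omega)]
    have := (sum_range_succ' f (n + 2)).symm.trans (sum_range_succ f (n + 2))
    rwa [h0, hN] at this
  apply Nat.add_right_cancel (m := ∑ i ∈ range (n + 2), f (i + 1))
  rw [hshift _ (by omega), hshift _ (by omega),
    oddChooseSum_eq_sum_range (N := n + 2) _ (by omega), ← sum_add_distrib,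
    sum_congr rfl fun i _ ↦ hterm i, htelescope, mul_sum, ← sum_add_distrib,
    ← sum_add_distrib]

theorem two_pow_mul_choose_add_two_add_one (n k : ℕ) :
    2 ^ (n + 2 - 2 * (k + 1)) * (n + 2 - (k + 1)).choose (k + 1) =
      2 * (2 ^ (n + 1 - 2 * (k + 1)) * (n + 1 - (k + 1)).choose (k + 1)) +
        2 ^ (n - 2 * k) * (n - k).choose k := by
  rcases lt_or_ge n (2 * k) with hn | hn
  · rw [choose_eq_zero_of_lt (by omega : n + 2 - (k + 1) < k + 1),
      choose_eq_zero_of_lt (by omega : n + 1 - (k + 1) < k + 1),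
      choose_eq_zero_of_lt (by omega : n - k < k)]
    simp
  obtain ⟨m, rfl⟩ := exists_add_of_le hn
  rcases m with _ | m
  · simp [show 2 * k + 2 - 2 * (k + 1) = 0 by omega, show 2 * k + 2 - (k + 1) = k + 1 by omega,
      show 2 * k + 1 - (k + 1) = k by omega, show 2 * k - k = k by omega]
  · rw [show 2 * k + (m + 1) + 2 - 2 * (k + 1) = m + 1 by omega,
      show 2 * k + (m + 1) + 2 - (k + 1) = k + m + 1 + 1 by omega,
      show 2 * k + (m + 1) + 1 - 2 * (k + 1) = m by omega,
      show 2 * k + (m + 1) + 1 - (k + 1) = k + m + 1 by omega,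
      show 2 * k + (m + 1) - 2 * k = m + 1 by omega,
      show 2 * k + (m + 1) - k = k + m + 1 by omega, choose_succ_succ' (k + m + 1)]
    ring

theorem oddChooseSum_eq : ∀ n k, oddChooseSum n k = 2 ^ (n - 2 * k) * (n - k).choose k
  | n, 0 => by simp [oddChooseSum_zero_right]
  | 0, k + 1 => by simp [oddChooseSum]
  | 1, k + 1 => by simp [oddChooseSum, sum_range_succ]
  | n + 2, k + 1 => by
    rw [oddChooseSum_add_two_add_one, oddChooseSum_eq (n + 1) (k + 1), oddChooseSum_eq n k,
      two_pow_mul_choose_add_two_add_one]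

theorem sum_Icc_choose_mul_choose_eq_oddChooseSum (n k : ℕ) :
    ∑ i ∈ Icc k (n / 2), (n + 1).choose (2 * i + 1) * i.choose k = oddChooseSum n k := by
  rw [oddChooseSum_eq_sum_range (N := n / 2 + 1) _ (by omega)]
  refine sum_subset (fun i hi ↦ by rw [mem_Icc] at hi; rw [mem_range]; omega)
    fun i hrange hi ↦ ?_
  rw [mem_range] at hrange
  rw [mem_Icc] at hi
  rw [choose_eq_zero_of_lt (show i < k by omega), mul_zero]

theorem stmt_10_general (n k : ℕ) :
    (∑ i ∈ Finset.Icc k (n / 2), Nat.choose (n + 1) (2 * i + 1) * Nat.choose i k) =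
      2 ^ (n - 2 * k) * Nat.choose (n - k) k := by
  rw [sum_Icc_choose_mul_choose_eq_oddChooseSum, oddChooseSum_eq]

theorem stmt_10 (n k : ℕ) (hk : k ≤ n / 2) :
    (∑ i ∈ Finset.Icc k (n / 2), Nat.choose (n + 1) (2 * i + 1) * Nat.choose i k) =
      2 ^ (n - 2 * k) * Nat.choose (n - k) k :=
  stmt_10_general n k
end

section
/- Let α and β be distinct complex numbers such that (αⁿ − βⁿ)/(α − β) is an integer for every natural number n ≥ 1. Then α + β and αβ are both integers; that is, α and β are the roots of a monic quadratic polynomial with integer coefficients. -/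
theorem stmt_11 (α β : ℂ) (hne : α ≠ β)
    (h : ∀ n : ℕ, 1 ≤ n → ∃ z : ℤ, (α ^ n - β ^ n) / (α - β) = z) :
    (∃ a : ℤ, α + β = a) ∧ (∃ b : ℤ, α * β = b) := by
  have hd : α - β ≠ 0 := sub_ne_zero.mpr hne
  obtain ⟨z2, h2⟩ := h 2 (by norm_num)
  obtain ⟨z3, h3⟩ := h 3 (by norm_num)
  rw [div_eq_iff hd] at h2 h3
  have ha : α + β = (z2 : ℂ) := by
    apply mul_right_cancel₀ hd
    linear_combination h2
  have hb : α * β = ((z2 ^ 2 - z3 : ℤ) : ℂ) := by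
    apply mul_right_cancel₀ hd
    push_cast
    linear_combination -h3 + (α + β + (z2 : ℂ)) * (α - β) * ha
  exact ⟨⟨z2, ha⟩, ⟨z2 ^ 2 - z3, hb⟩⟩
end

section
/- Let p, q ∈ ℂ with p ≠ 0 and q ≠ 0, let α, β ∈ ℂ satisfy α + β = p and αβ = −q, and let x ∈ ℂ be a nonzero number with x² = −p²/q. Then for every natural number n ≥ 0, αⁿ + βⁿ = 2 · pⁿ · x^{−n} · T_n(x/2), where T_n is the n-th Chebyshev polynomial of the first kind. -/
theorem stmt_12 (p q x : ℂ) (hp : p ≠ 0) (hq : q ≠ 0) (hx : x ≠ 0)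
    (hx2 : x ^ 2 = -(p ^ 2) / q) (α β : ℂ) (hsum : α + β = p) (hprod : α * β = -q) :
    ∀ n : ℕ,
      α ^ n + β ^ n = 2 * p ^ n * x⁻¹ ^ n * (Polynomial.Chebyshev.T ℂ n).eval (x / 2) := by
  have hinv : x⁻¹ * x = 1 := inv_mul_cancel₀ hx
  have hinv2 : x⁻¹ ^ 2 * x ^ 2 = 1 := by
    rw [← mul_pow, hinv, one_pow]
  have hq' : q * q⁻¹ = 1 := mul_inv_cancel₀ hq
  have hx2' : x ^ 2 * q = -(p ^ 2) := by
    linear_combination q * hx2 - p ^ 2 * hq'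
  have hkey : p ^ 2 * x⁻¹ ^ 2 = -q := by
    linear_combination (x⁻¹ ^ 2) * hx2' + (-q) * hinv2
  intro n
  induction n using Nat.twoStepInduction with
  | zero => simp; norm_num
  | one =>
    simp only [pow_one, Nat.cast_one, Polynomial.Chebyshev.T_one, Polynomial.eval_X]
    rw [hsum]
    field_simp
  | more n ih1 ih2 =>
    set A := (Polynomial.Chebyshev.T ℂ (n + 1)).eval (x / 2) with hA
    set B := (Polynomial.Chebyshev.T ℂ n).eval (x / 2) with hB
    have hT : (Polynomial.Chebyshev.T ℂ ((n + 2 : ℕ) : ℤ)).eval (x / 2) = x * A - B := by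
      push_cast
      rw [Polynomial.Chebyshev.T_add_two]
      simp only [Polynomial.eval_sub, Polynomial.eval_mul, Polynomial.eval_ofNat,
        Polynomial.eval_X, ← hA, ← hB]
      ring
    rw [hT]
    have hS : α ^ (n + 2) + β ^ (n + 2)
        = p * (α ^ (n + 1) + β ^ (n + 1)) + q * (α ^ n + β ^ n) := by
      linear_combination (α ^ (n + 1) + β ^ (n + 1)) * hsum - (α ^ n + β ^ n) * hprod
    rw [hS]
    push_cast at ih2
    rw [ih1, ih2]
    linear_combination (-2 * p ^ (n + 2) * x⁻¹ ^ (n + 1) * A) * hinv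
      + (2 * p ^ n * x⁻¹ ^ n * B) * hkey
end

section
/- Let p, q ∈ ℂ with p ≠ 0 and q ≠ 0, let α, β ∈ ℂ satisfy α + β = p, αβ = −q and α ≠ β, and let x ∈ ℂ be a nonzero number with x² = −p²/q. Then for every natural number n ≥ 0, (α^{n+1} − β^{n+1})/(α − β) = pⁿ · x^{−n} · U_n(x/2), where U_n is the n-th Chebyshev polynomial of the second kind. -/
open Polynomial Chebyshev

/-- Homogenised form of `U_n ((s + s⁻¹) / 2) = (s ^ (n + 1) - s⁻¹ ^ (n + 1)) / (s - s⁻¹)`,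
for `s = α / y`. -/
theorem sub_mul_pow_mul_U_eval {R : Type*} [CommRing R] {α β y c : R}
    (hsum : α + β = 2 * c * y) (hprod : α * β = y ^ 2) (n : ℕ) :
    (α - β) * (y ^ n * (U R n).eval c) = α ^ (n + 1) - β ^ (n + 1) := by
  induction n using Nat.twoStepInduction with
  | zero => simp
  | one =>
    simp only [Nat.cast_one, U_one, eval_mul, eval_ofNat, eval_X]
    linear_combination -(α - β) * hsum
  | more n ih₀ ih₁ =>
    push_cast at ih₁ ⊢
    rw [U_add_two]
    simp only [eval_sub, eval_mul, eval_ofNat, eval_X]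
    linear_combination 2 * c * y * ih₁ - y ^ 2 * ih₀ - (α ^ (n + 2) - β ^ (n + 2)) * hsum
      + (α ^ (n + 1) - β ^ (n + 1)) * hprod

theorem stmt_13_general (p q x : ℂ) (hp : p ≠ 0) (hx : x ≠ 0)
    (hx2 : x ^ 2 = -(p ^ 2) / q) (α β : ℂ) (hsum : α + β = p) (hprod : α * β = -q)
    (hne : α ≠ β) :
    ∀ n : ℕ,
      (α ^ (n + 1) - β ^ (n + 1)) / (α - β) =
        p ^ n * x⁻¹ ^ n * (Polynomial.Chebyshev.U ℂ n).eval (x / 2) := by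
  intro n
  have hsum' : α + β = 2 * (x / 2) * (p * x⁻¹) := by field_simp; exact hsum
  have hprod' : α * β = (p * x⁻¹) ^ 2 := by
    rw [hprod, mul_pow, inv_pow, hx2]
    field_simp
  rw [div_eq_iff (sub_ne_zero.mpr hne), ← sub_mul_pow_mul_U_eval hsum' hprod' n]
  ring

theorem stmt_13 (p q x : ℂ) (hp : p ≠ 0) (hq : q ≠ 0) (hx : x ≠ 0)
    (hx2 : x ^ 2 = -(p ^ 2) / q) (α β : ℂ) (hsum : α + β = p) (hprod : α * β = -q)
    (hne : α ≠ β) :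
    ∀ n : ℕ,
      (α ^ (n + 1) - β ^ (n + 1)) / (α - β) =
        p ^ n * x⁻¹ ^ n * (Polynomial.Chebyshev.U ℂ n).eval (x / 2) :=
  stmt_13_general p q x hp hx hx2 α β hsum hprod hne
end

section
/- For every natural number n ≥ 1, the n-th Lucas number satisfies L_n = Σ_{k=0}^{⌊n/2⌋} (n/(n−k)) · C(n−k, k), where each term (n/(n−k))·C(n−k,k) is a rational number that is in fact an integer; equivalently, multiplying through, Σ_{k=0}^{⌊n/2⌋} n·C(n−k,k)/(n−k) = L_n as an identity of rationals. -/
/-!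
Since `n / (n - k) = 2 - (n - 2k) / (n - k)` and `(n - 2k) C(n - k, k) = (n - k) C(n - k - 1, k)`,
the `k`-th term equals `2 C(n - k, k) - C(n - 1 - k, k)`, an integer. Summing the shallow
diagonals of Pascal's triangle gives `2 F_{n+1} - F_n`, which is `L_n`.
-/

open Finset

/-- The Lucas numbers: `L 0 = 2`, `L 1 = 1`, `L (n+2) = L (n+1) + L n`. -/
def lucas : ℕ → ℕ
  | 0 => 2
  | 1 => 1
  | n + 2 => lucas (n + 1) + lucas n

theorem lucas_add_fib (n : ℕ) : lucas n + Nat.fib n = 2 * Nat.fib (n + 1) := by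
  induction n using lucas.induct with
  | case1 => rfl
  | case2 => rfl
  | case3 n ih₁ ih₀ =>
    rw [lucas, Nat.fib_add_two, Nat.fib_add_two (n := n + 1)]
    linarith [Nat.fib_add_two (n := n)]

theorem Nat.sum_range_choose_sub_eq_fib {m N : ℕ} (h : m < 2 * N) :
    ∑ k ∈ range N, (m - k).choose k = Nat.fib (m + 1) := by
  have hpad : ∀ M, m < 2 * M → M ≤ N + (m + 1) →
      ∑ k ∈ range M, (m - k).choose k = ∑ k ∈ range (N + (m + 1)), (m - k).choose k :=
    fun M hM hle => sum_subset (range_subset_range.2 hle) fun k hk hkM =>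
      Nat.choose_eq_zero_of_lt (by rw [mem_range] at hk hkM; omega)
  rw [hpad N h (by omega), ← hpad (m + 1) (by omega) (by omega), Nat.fib_succ_eq_sum_choose,
    ← Finset.Nat.sum_antidiagonal_swap]
  exact (Finset.Nat.sum_antidiagonal_eq_sum_range_succ (fun i j => j.choose i) m).symm

theorem Nat.cast_choose_mul_succ_eq {R : Type*} [CommRing R] (m k : ℕ) :
    (m.choose k : R) * (m + 1) = (m + 1).choose k * (m + 1 - k) := by
  rcases le_or_gt k (m + 1) with hk | hk
  · simpa [Nat.cast_sub hk] using congrArg (Nat.cast : ℕ → R) (Nat.choose_mul_succ_eq m k)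
  · simp [Nat.choose_eq_zero_of_lt hk, Nat.choose_eq_zero_of_lt (by omega : m < k)]

theorem div_sub_mul_choose_eq {K : Type*} [Field K] [CharZero K] {n k : ℕ} (hk : k < n) :
    (n : K) / (n - k) * (n - k).choose k = 2 * (n - k).choose k - (n - 1 - k).choose k := by
  obtain ⟨m, rfl⟩ : ∃ m, n = m + 1 + k := ⟨n - k - 1, by omega⟩
  rw [show m + 1 + k - k = m + 1 by omega, show m + 1 + k - 1 - k = m by omega]
  push_cast
  field_simp
  linear_combination Nat.cast_choose_mul_succ_eq (R := K) m k

theorem stmt_16 (n : ℕ) (hn : 1 ≤ n) :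
    (∀ k : ℕ, k ≤ n / 2 →
        ∃ z : ℤ, ((n : ℚ) / ((n : ℚ) - (k : ℚ))) * (Nat.choose (n - k) k : ℚ) = z) ∧
      (∑ k ∈ Finset.range (n / 2 + 1),
          ((n : ℚ) / ((n : ℚ) - (k : ℚ))) * (Nat.choose (n - k) k : ℚ)) = lucas n := by
  have hterm : ∀ k ∈ range (n / 2 + 1), (n : ℚ) / (n - k) * (n - k).choose k
      = 2 * (n - k).choose k - (n - 1 - k).choose k := fun k hk =>
    div_sub_mul_choose_eq (by rw [mem_range] at hk; omega)
  refine ⟨fun k hk => ⟨2 * (n - k).choose k - (n - 1 - k).choose k, ?_⟩, ?_⟩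
  · rw [hterm k (mem_range.2 (by omega))]
    push_cast
    ring
  · rw [sum_congr rfl hterm, sum_sub_distrib, ← mul_sum, ← Nat.cast_sum, ← Nat.cast_sum,
      Nat.sum_range_choose_sub_eq_fib (by omega), Nat.sum_range_choose_sub_eq_fib (by omega),
      Nat.sub_add_cancel hn, sub_eq_iff_eq_add]
    exact_mod_cast (lucas_add_fib n).symm
end

section
/- For every natural number n, Σ_{i=0}^{n} C(n, i) · L_i = L_{2n}, where L_k denotes the k-th Lucas number. -/
lemma pascal_sum (f : ℕ → ℕ) (n : ℕ) :
    ∑ i ∈ Finset.range (n + 2), Nat.choose (n + 1) i * f i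
      = ∑ i ∈ Finset.range (n + 1), Nat.choose n i * f i
      + ∑ i ∈ Finset.range (n + 1), Nat.choose n i * f (i + 1) := by
  have h1 : ∑ i ∈ Finset.range (n + 1), Nat.choose n (i + 1) * f (i + 1)
      = ∑ i ∈ Finset.range n, Nat.choose n (i + 1) * f (i + 1) := by
    rw [Finset.sum_range_succ, Nat.choose_succ_self]; simp
  have h2 : ∑ i ∈ Finset.range (n + 1), Nat.choose n i * f i
      = ∑ i ∈ Finset.range n, Nat.choose n (i + 1) * f (i + 1)
        + Nat.choose n 0 * f 0 := Finset.sum_range_succ' _ n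
  rw [Finset.sum_range_succ' _ (n + 1)]
  simp only [Nat.choose_succ_succ, add_mul, Finset.sum_add_distrib, Nat.choose_zero_right]
  rw [h1, h2, Nat.choose_zero_right]
  ring

lemma key (n : ℕ) :
    (∑ i ∈ Finset.range (n + 1), Nat.choose n i * lucas i = lucas (2 * n)) ∧
    (∑ i ∈ Finset.range (n + 1), Nat.choose n i * lucas (i + 1) = lucas (2 * n + 1)) := by
  induction n with
  | zero => simp [lucas]
  | succ n ih =>
    have e2 : 2 * (n + 1) = 2 * n + 2 := by ring
    have lrec : ∀ m, lucas (m + 2) = lucas (m + 1) + lucas m := fun m => rfl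
    constructor
    · rw [pascal_sum, ih.1, ih.2, e2, lrec]
      ring
    · rw [pascal_sum (fun i => lucas (i + 1))]
      simp only [lrec, mul_add, Finset.sum_add_distrib, ih.1, ih.2, e2]
      ring

theorem stmt_17 (n : ℕ) :
    ∑ i ∈ Finset.range (n + 1), Nat.choose n i * lucas i = lucas (2 * n) := by
  exact (key n).1
end
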